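/- Let E, F be symmetric Banach function spaces on I = (0,1) or (0,∞) with fundamental functions f_E and f_F. Then the fundamental function of the product space satisfies f_{E⊙F}(t) = f_E(t)·f_F(t) for all t ∈ I, i.e., ‖χ_{[0,t]}‖_{E⊙F} = ‖χ_{[0,t]}‖_E · ‖χ_{[0,t]}‖_F. -/

import Mathlib

/-!
The bound `‖χ‖_{E⊙F} ≤ f_E(t) f_F(t)` comes from `χ = χ · χ`. Conversely, let `χ_{(0,t]} = x y`
and let `u`, `v` be `|x|`, `|y|` restricted to `(0,t]`. Since `u v ≥ 1` on `(0,t]`, the decreasing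
rearrangements satisfy `u*(s) v*(s') ≥ 1` whenever `s + s' < t`. On the other hand, averaging the
`n` cyclic shifts of a step minorant of `u*` on the uniform partition of `(0,t]` gives
`f_E(t) · (1/n) ∑ᵢ u*((i+1)t/n) ≤ ‖x‖_E` (a discrete form of `E ⊆ M_{f_E}`), and likewise for `v`.
Cauchy–Schwarz bounds the product of the two Riemann sums below by `(1 - 2/n)²`, and `n → ∞`
gives `f_E(t) f_F(t) ≤ ‖x‖_E ‖y‖_F`.
-/

open MeasureTheory

/-- A Banach ideal space on a measure space: a linear subspace of measurable
functions (mod null sets) with a complete lattice norm having the ideal property,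
and a weak unit (saturation). -/
structure IdealSpace {α : Type*} [MeasurableSpace α] (μ : Measure α) where
  carrier : Set (α → ℝ)
  norm : (α → ℝ) → ℝ
  zero_mem : (0 : α → ℝ) ∈ carrier
  add_mem : ∀ {f g : α → ℝ}, f ∈ carrier → g ∈ carrier → f + g ∈ carrier
  smul_mem : ∀ (c : ℝ) {f : α → ℝ}, f ∈ carrier → c • f ∈ carrier
  norm_nonneg : ∀ f, 0 ≤ norm f
  norm_eq_zero : ∀ f ∈ carrier, (norm f = 0 ↔ f =ᵐ[μ] 0)
  norm_add : ∀ f g, f ∈ carrier → g ∈ carrier → norm (f + g) ≤ norm f + norm g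
  norm_smul : ∀ (c : ℝ) (f : α → ℝ), norm (c • f) = |c| * norm f
  ideal_mem : ∀ {f g : α → ℝ}, g ∈ carrier → (∀ᵐ a ∂μ, |f a| ≤ |g a|) → f ∈ carrier
  ideal_norm : ∀ {f g : α → ℝ}, g ∈ carrier → (∀ᵐ a ∂μ, |f a| ≤ |g a|) → norm f ≤ norm g
  weak_unit : ∃ w ∈ carrier, ∀ᵐ a ∂μ, 0 < w a
  complete : ∀ x : ℕ → α → ℝ, (∀ n, x n ∈ carrier) →
    (∀ ε > 0, ∃ N, ∀ m ≥ N, ∀ n ≥ N, norm (x m - x n) < ε) →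
    ∃ f ∈ carrier, Filter.Tendsto (fun n => norm (x n - f)) Filter.atTop (nhds 0)

variable {α : Type*} [MeasurableSpace α] {μ : Measure α}

/-- The pointwise product space E ⊙ F. -/
def prodSet (E F : IdealSpace μ) : Set (α → ℝ) :=
  {z | ∃ x ∈ E.carrier, ∃ y ∈ F.carrier, z =ᵐ[μ] x * y}

/-- The quasi-norm of the pointwise product space E ⊙ F. -/
noncomputable def prodNorm (E F : IdealSpace μ) (z : α → ℝ) : ℝ :=
  sInf {r | ∃ x ∈ E.carrier, ∃ y ∈ F.carrier, z =ᵐ[μ] x * y ∧ r = E.norm x * F.norm y}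

/-- A rearrangement invariant (symmetric) space: equimeasurable functions belong
together and have equal norms. -/
def IsSymmetric {μ : Measure ℝ} (E : IdealSpace μ) : Prop :=
  ∀ f g : ℝ → ℝ, f ∈ E.carrier →
    (∀ lam : ℝ, 0 < lam → μ {a | lam < |f a|} = μ {a | lam < |g a|}) →
    g ∈ E.carrier ∧ E.norm g = E.norm f

open Set Filter Topology
open scoped ENNReal

local notation:max "χ" S:max => Set.indicator S (fun _ => (1 : ℝ))

namespace IdealSpace

variable (E : IdealSpace μ)

lemma norm_zero : E.norm 0 = 0 :=
  (E.norm_eq_zero 0 E.zero_mem).mpr EventuallyEq.rfl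

lemma norm_sum_le {ι : Type*} (s : Finset ι) {f : ι → α → ℝ}
    (hf : ∀ i ∈ s, f i ∈ E.carrier) : E.norm (∑ i ∈ s, f i) ≤ ∑ i ∈ s, E.norm (f i) :=
  Finset.le_sum_of_subadditive_on_pred E.norm (· ∈ E.carrier) E.norm_zero.le E.norm_add
    (fun _ _ => E.add_mem) f hf

variable {E}

lemma mem_and_norm_le_of_abs_le {f g : α → ℝ} (hg : g ∈ E.carrier) (hfg : ∀ a, |f a| ≤ |g a|) :
    f ∈ E.carrier ∧ E.norm f ≤ E.norm g :=
  ⟨E.ideal_mem hg (.of_forall hfg), E.ideal_norm hg (.of_forall hfg)⟩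

lemma indicator_one_mem_and_norm_le {S T : Set α} (hST : S ⊆ T) (hT : χ T ∈ E.carrier) :
    χ S ∈ E.carrier ∧ E.norm (χ S) ≤ E.norm (χ T) :=
  mem_and_norm_le_of_abs_le hT fun _ => abs_le_abs_of_nonneg
    (indicator_nonneg (fun _ _ => zero_le_one) _)
    (indicator_le_indicator_of_subset hST (fun _ => zero_le_one) _)

lemma norm_indicator_one_pos {S : Set α} (hS : χ S ∈ E.carrier) (hμS : μ S ≠ 0) :
    0 < E.norm (χ S) := by
  refine (E.norm_nonneg _).lt_of_ne fun h => hμS ?_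
  have h0 : ∀ᵐ a ∂μ, χ S a = 0 := (E.norm_eq_zero _ hS).mp h.symm
  exact measure_mono_null (fun a ha => by simp [ha]) (ae_iff.mp h0)

end IdealSpace

lemma prodNorm_le {E F : IdealSpace μ} {x y z : α → ℝ} (hx : x ∈ E.carrier) (hy : y ∈ F.carrier)
    (hz : z =ᵐ[μ] x * y) : prodNorm E F z ≤ E.norm x * F.norm y :=
  csInf_le ⟨0, by
    rintro _ ⟨x, -, y, -, -, rfl⟩
    exact mul_nonneg (E.norm_nonneg x) (F.norm_nonneg y)⟩
    ⟨x, hx, y, hy, hz, rfl⟩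

lemma le_prodNorm {E F : IdealSpace μ} {z : α → ℝ} (hz : z ∈ prodSet E F) {c : ℝ}
    (h : ∀ x ∈ E.carrier, ∀ y ∈ F.carrier, z =ᵐ[μ] x * y → c ≤ E.norm x * F.norm y) :
    c ≤ prodNorm E F z := by
  obtain ⟨x, hx, y, hy, hxy⟩ := hz
  refine le_csInf ⟨_, x, hx, y, hy, hxy, rfl⟩ ?_
  rintro _ ⟨x, hx, y, hy, hxy, rfl⟩
  exact h x hx y hy hxy

noncomputable def distribution (μ : Measure α) (u : α → ℝ) (r : ℝ) : ℝ≥0∞ := μ {a | r < u a}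

lemma distribution_anti (u : α → ℝ) : Antitone (distribution μ u) :=
  fun _ _ h => measure_mono fun _ ha => h.trans_lt ha

lemma distribution_le_of_forall_lt {u : α → ℝ} {r : ℝ} {c : ℝ≥0∞}
    (h : ∀ r' > r, distribution μ u r' ≤ c) : distribution μ u r ≤ c := by
  have hunion : {a | r < u a} = ⋃ k : ℕ, {a | r + 1 / (k + 1) < u a} := by
    ext a
    simp only [mem_ofPred_eq, mem_iUnion]
    refine ⟨fun ha => ?_, fun ⟨k, hk⟩ => (lt_add_of_pos_right r (by positivity)).trans hk⟩
    obtain ⟨k, hk⟩ := exists_nat_one_div_lt (sub_pos.mpr ha)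
    exact ⟨k, by linarith⟩
  have hmono : Monotone fun k : ℕ => {a | r + 1 / ((k : ℝ) + 1) < u a} := fun k m hkm =>
    ofPred_subset_ofPred.mpr fun a => (add_le_add_right (Nat.one_div_le_one_div hkm) r).trans_lt
  rw [distribution, hunion, hmono.measure_iUnion]
  exact iSup_le fun k => h _ (lt_add_of_pos_right r (by positivity))

lemma distribution_smul_indicator_one (S : Set α) {r b : ℝ} (hb : 0 ≤ b) :
    distribution μ (r • χ S) b = if b < r then μ S else 0 := by
  unfold distribution
  split_ifs with h
  · congr 1
    ext a
    by_cases ha : a ∈ S <;> simp [ha, h, hb.not_gt]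
  · convert measure_empty (μ := μ)
    ext a
    by_cases ha : a ∈ S <;> simp [ha, h, hb.not_gt]

/-- The decreasing rearrangement `u*` of `u`; it vanishes on `(-∞, 0]`. -/
noncomputable def rearrangement (μ : Measure α) (u : α → ℝ) (s : ℝ) : ℝ :=
  if 0 < s then sInf {r | 0 ≤ r ∧ distribution μ u r ≤ ENNReal.ofReal s} else 0

section Rearrangement

variable {u : α → ℝ} {s r : ℝ}

lemma rearrangement_nonneg (s : ℝ) : 0 ≤ rearrangement μ u s := by
  unfold rearrangement
  split_ifs
  exacts [Real.sInf_nonneg fun _ hr => hr.1, le_rfl]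

lemma rearrangement_le (hs : 0 < s) (hr : 0 ≤ r) (h : distribution μ u r ≤ ENNReal.ofReal s) :
    rearrangement μ u s ≤ r := by
  rw [rearrangement, if_pos hs]
  exact csInf_le ⟨0, fun _ hr => hr.1⟩ ⟨hr, h⟩

variable (hu : ∀ s > 0, ∃ r, distribution μ u r ≤ ENNReal.ofReal s)
include hu

lemma distribution_rearrangement_le (hs : 0 < s) :
    distribution μ u (rearrangement μ u s) ≤ ENNReal.ofReal s := by
  obtain ⟨r₀, hr₀⟩ := hu s hs
  have hne : {r | 0 ≤ r ∧ distribution μ u r ≤ ENNReal.ofReal s}.Nonempty :=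
    ⟨max r₀ 0, le_max_right _ _, (distribution_anti u (le_max_left _ _)).trans hr₀⟩
  refine distribution_le_of_forall_lt fun r' hr' => ?_
  rw [rearrangement, if_pos hs] at hr'
  obtain ⟨r, hr, hrr'⟩ := exists_lt_of_csInf_lt hne hr'
  exact (distribution_anti u hrr'.le).trans hr.2

lemma lt_rearrangement_iff (hs : 0 < s) (hr : 0 ≤ r) :
    r < rearrangement μ u s ↔ ENNReal.ofReal s < distribution μ u r := by
  refine ⟨fun h => lt_of_not_ge fun h' => (rearrangement_le hs hr h').not_gt h,
    fun h => lt_of_not_ge fun h' => ?_⟩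
  exact ((distribution_anti u h').trans (distribution_rearrangement_le hu hs)).not_gt h

lemma rearrangement_antitoneOn : AntitoneOn (rearrangement μ u) (Ioi 0) :=
  fun s hs _ _ hss' => rearrangement_le (lt_of_lt_of_le hs hss') (rearrangement_nonneg s)
    ((distribution_rearrangement_le hu hs).trans (ENNReal.ofReal_le_ofReal hss'))

end Rearrangement

theorem one_le_rearrangement_mul_rearrangement {u v : α → ℝ}
    (hu : ∀ s > 0, ∃ r, distribution μ u r ≤ ENNReal.ofReal s)
    (hv : ∀ s > 0, ∃ r, distribution μ v r ≤ ENNReal.ofReal s) (hv0 : 0 ≤ v) {S : Set α}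
    (huv : ∀ᵐ a ∂μ, a ∈ S → 1 ≤ u a * v a) {s s' : ℝ} (hs : 0 < s) (hs' : 0 < s')
    (hS : ENNReal.ofReal (s + s') < μ S) :
    1 ≤ rearrangement μ u s * rearrangement μ v s' := by
  set P := rearrangement μ u s
  set Q := rearrangement μ v s'
  by_contra! hPQ
  have hcover : S ≤ᵐ[μ] ({a | P < u a} ∪ {a | Q < v a} : Set α) := by
    filter_upwards [huv] with a ha (haS : a ∈ S)
    show a ∈ {a | P < u a} ∪ {a | Q < v a}
    by_contra h
    simp only [mem_union, mem_ofPred_eq, not_or, not_lt] at h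
    have := mul_le_mul h.1 h.2 (hv0 a) (rearrangement_nonneg s)
    linarith [ha haS]
  refine hS.not_ge ?_
  calc μ S ≤ μ ({a | P < u a} ∪ {a | Q < v a}) := measure_mono_ae hcover
    _ ≤ distribution μ u P + distribution μ v Q := measure_union_le _ _
    _ ≤ ENNReal.ofReal s + ENNReal.ofReal s' :=
        add_le_add (distribution_rearrangement_le hu hs) (distribution_rearrangement_le hv hs')
    _ = ENNReal.ofReal (s + s') := (ENNReal.ofReal_add hs.le hs'.le).symm

lemma sq_le_sum_mul_sum_of_one_le_mul_reflect {m : ℕ} {a b : ℕ → ℝ} (ha : ∀ i, 0 ≤ a i)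
    (hb : ∀ i, 0 ≤ b i) (hab : ∀ i < m, 1 ≤ a i * b (m - 1 - i)) :
    (m : ℝ) ^ 2 ≤ (∑ i ∈ Finset.range m, a i) * ∑ i ∈ Finset.range m, b i := by
  have hsqrt : (m : ℝ) ≤ ∑ i ∈ Finset.range m, √(a i) * √(b (m - 1 - i)) := by
    calc (m : ℝ) = ∑ i ∈ Finset.range m, (1 : ℝ) := by simp
      _ ≤ _ := Finset.sum_le_sum fun i hi => by
        rw [← Real.sqrt_mul (ha i)]
        exact Real.one_le_sqrt.mpr (hab i (Finset.mem_range.mp hi))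
  have hcs := Real.sum_sqrt_mul_sqrt_le (Finset.range m) ha fun i => hb (m - 1 - i)
  rw [Finset.sum_range_reflect b m] at hcs
  calc (m : ℝ) ^ 2 ≤ (√(∑ i ∈ Finset.range m, a i) * √(∑ i ∈ Finset.range m, b i)) ^ 2 :=
        pow_le_pow_left₀ (Nat.cast_nonneg m) (hsqrt.trans hcs) 2
    _ = _ := by
        rw [mul_pow, Real.sq_sqrt (Finset.sum_nonneg fun i _ => ha i),
          Real.sq_sqrt (Finset.sum_nonneg fun i _ => hb i)]

lemma le_of_forall_mul_sub_two_sq_le {a b : ℝ}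
    (h : ∀ n : ℕ, 2 ≤ n → a * ((n : ℝ) - 2) ^ 2 ≤ n ^ 2 * b) : a ≤ b := by
  have hlim : Tendsto (fun n : ℕ => a * (1 - 2 / n) ^ 2) atTop (𝓝 a) := by
    simpa using ((tendsto_const_nhds (x := (1 : ℝ)).sub
      (tendsto_const_div_atTop_nhds_zero_nat 2)).pow 2).const_mul a
  refine le_of_tendsto hlim (eventually_atTop.mpr ⟨2, fun n hn => ?_⟩)
  have hn0 : (0 : ℝ) < n := by exact_mod_cast (by omega : 0 < n)
  rw [one_sub_div hn0.ne', div_pow, ← mul_div_assoc, div_le_iff₀ (by positivity)]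
  linarith [h n hn]

section Lebesgue

variable {μ : Measure ℝ} {t : ℝ} (hμ : ∀ S ⊆ Ioc 0 t, μ S = volume S)
include hμ

lemma measure_Ioc_of_subset {a b : ℝ} (ha : 0 ≤ a) (hb : b ≤ t) :
    μ (Ioc a b) = ENNReal.ofReal (b - a) := by
  rw [hμ _ (Ioc_subset_Ioc ha hb), Real.volume_Ioc]

lemma distribution_le_of_support_subset {u : ℝ → ℝ} (hsupp : Function.support u ⊆ Ioc 0 t)
    {r : ℝ} (hr : 0 ≤ r) : distribution μ u r ≤ ENNReal.ofReal t := by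
  refine (measure_mono fun a (ha : r < u a) => hsupp (hr.trans_lt ha).ne').trans ?_
  rw [measure_Ioc_of_subset hμ le_rfl le_rfl, sub_zero]

lemma distribution_rearrangement (ht : 0 < t) {u : ℝ → ℝ}
    (hu : ∀ s > 0, ∃ r, distribution μ u r ≤ ENNReal.ofReal s)
    (hsupp : Function.support u ⊆ Ioc 0 t) {r : ℝ} (hr : 0 < r) :
    distribution μ (rearrangement μ u) r = distribution μ u r := by
  have hle := distribution_le_of_support_subset hμ hsupp hr.le
  set l := (distribution μ u r).toReal
  have hl : ENNReal.ofReal l = distribution μ u r :=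
    ENNReal.ofReal_toReal (ne_top_of_le_ne_top ENNReal.ofReal_ne_top hle)
  have hlt : l ≤ t := ENNReal.toReal_le_of_le_ofReal ht.le hle
  have hset : {s | r < rearrangement μ u s} = Ioo 0 l := by
    ext s
    by_cases hs : 0 < s
    · rw [mem_ofPred_eq, lt_rearrangement_iff hu hs hr.le, ← hl,
        ENNReal.ofReal_lt_ofReal_iff_of_nonneg hs.le]
      simp [hs]
    · simp [rearrangement, hs, hr.le.not_gt]
  rw [distribution, hset, hμ _ (Ioo_subset_Ioc_self.trans (Ioc_subset_Ioc_right hlt)),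
    Real.volume_Ioo, sub_zero, hl]

end Lebesgue

section StepFunction

variable {t : ℝ} {n : ℕ} [NeZero n]

/-- The index `i` of the cell `(i t / n, (i + 1) t / n]` containing `a ∈ (0, t]`. -/
noncomputable def cellIndex (t : ℝ) (n : ℕ) [NeZero n] (a : ℝ) : Fin n :=
  Fin.ofNat n (⌈a * n / t⌉₊ - 1)

lemma cellIndex_eq_iff (ht : 0 < t) {a : ℝ} {i : Fin n} :
    a ∈ Ioc 0 t ∧ cellIndex t n a = i ↔ a ∈ Ioc (i * t / n) ((i + 1) * t / n) := by
  have hn : (0 : ℝ) < n := Nat.cast_pos.mpr (NeZero.pos n)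
  have hceil : ∀ k : ℕ, a ∈ Ioc (k * t / n) ((k + 1) * t / n) ↔ ⌈a * n / t⌉₊ = k + 1 := by
    intro k
    rw [Nat.ceil_eq_iff k.succ_ne_zero, mem_Ioc]
    push_cast
    rw [div_lt_iff₀ hn, le_div_iff₀ hn, lt_div_iff₀ ht, div_le_iff₀ ht]
  constructor
  · rintro ⟨ha, rfl⟩
    have h1 : 0 < a * n / t := by have := ha.1; positivity
    have h2 : a * n / t ≤ n := by rw [div_le_iff₀ ht]; nlinarith [ha.2]
    have hc1 : 1 ≤ ⌈a * n / t⌉₊ := Nat.one_le_ceil_iff.mpr h1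
    have hc2 : ⌈a * n / t⌉₊ ≤ n := Nat.ceil_le.mpr h2
    have hval : (cellIndex t n a : ℕ) = ⌈a * n / t⌉₊ - 1 := by
      rw [cellIndex, Fin.val_ofNat, Nat.mod_eq_of_lt (by omega)]
    rw [hceil, hval]
    omega
  · intro ha
    refine ⟨⟨lt_of_le_of_lt (by positivity) ha.1, ?_⟩, ?_⟩
    · calc a ≤ (i + 1) * t / n := ha.2
        _ ≤ n * t / n := by gcongr; exact_mod_cast i.is_lt
        _ = t := by field_simp
    · rw [cellIndex, (hceil i).mp ha, Nat.add_sub_cancel, Fin.ofNat_val_eq_self]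

noncomputable def stepFun (t : ℝ) (c : Fin n → ℝ) : ℝ → ℝ :=
  (Ioc 0 t).indicator fun a => c (cellIndex t n a)

lemma stepFun_nonneg {c : Fin n → ℝ} (hc : 0 ≤ c) : 0 ≤ stepFun t c :=
  indicator_nonneg fun _ _ => hc _

lemma sum_stepFun_add_right (c : Fin n → ℝ) :
    ∑ k, stepFun t (fun i => c (i + k)) = (∑ i, c i) • χ (Ioc 0 t) := by
  ext a
  by_cases ha : a ∈ Ioc 0 t
  · simp only [Finset.sum_apply, stepFun, indicator_of_mem ha, Pi.smul_apply, smul_eq_mul, mul_one]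
    exact Equiv.sum_comp (Equiv.addLeft (cellIndex t n a)) c
  · simp [stepFun, ha]

lemma distribution_stepFun {μ : Measure ℝ} (hμ : ∀ S ⊆ Ioc 0 t, μ S = volume S) (ht : 0 < t)
    (c : Fin n → ℝ) {r : ℝ} (hr : 0 ≤ r) :
    distribution μ (stepFun t c) r = ∑ i, if r < c i then ENNReal.ofReal (t / n) else 0 := by
  have hset : {a | r < stepFun t c a}
      = ⋃ i ∈ Finset.univ.filter (r < c ·), Ioc (i * t / n) ((i + 1) * t / n) := by
    ext a
    simp only [mem_ofPred_eq, mem_iUnion, Finset.mem_filter, Finset.mem_univ, true_and,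
      exists_prop, ← cellIndex_eq_iff ht]
    by_cases ha : a ∈ Ioc 0 t <;> simp [stepFun, ha, hr.not_gt]
  have hcell : ∀ i : Fin n, μ (Ioc (i * t / n) ((i + 1) * t / n)) = ENNReal.ofReal (t / n) :=
    fun i => by
      rw [hμ _ fun a ha => ((cellIndex_eq_iff ht).mpr ha).1, Real.volume_Ioc]
      congr 1
      ring
  rw [distribution, hset, measure_biUnion_finset, Finset.sum_filter]
  · simp only [hcell]
  · exact fun i _ j _ hij => disjoint_left.mpr fun a hai haj =>
      hij (((cellIndex_eq_iff ht).mpr hai).2.symm.trans ((cellIndex_eq_iff ht).mpr haj).2)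
  · exact fun _ _ => measurableSet_Ioc

end StepFunction

namespace IsSymmetric

variable {μ : Measure ℝ} {E F : IdealSpace μ} {t : ℝ}

lemma mem_and_norm_eq_of_distribution_eq (hE : IsSymmetric E) {f g : ℝ → ℝ} (hf : f ∈ E.carrier)
    (hf0 : 0 ≤ f) (hg0 : 0 ≤ g) (hfg : ∀ r > 0, distribution μ f r = distribution μ g r) :
    g ∈ E.carrier ∧ E.norm g = E.norm f :=
  hE f g hf fun r hr => by
    simpa only [distribution, abs_of_nonneg (hf0 _), abs_of_nonneg (hg0 _)] using hfg r hr

theorem norm_indicator_mul_sum_le (hE : IsSymmetric E) (hμ : ∀ S ⊆ Ioc 0 t, μ S = volume S)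
    (ht : 0 < t) {n : ℕ} [NeZero n] {c : Fin n → ℝ} (hc : 0 ≤ c)
    {g : ℝ → ℝ} (hg : g ∈ E.carrier) (hcg : stepFun t c ≤ g) :
    E.norm (χ (Ioc 0 t)) * ∑ i, c i ≤ n * E.norm g := by
  obtain ⟨hc_mem, hc_norm⟩ := IdealSpace.mem_and_norm_le_of_abs_le hg fun a =>
    abs_le_abs_of_nonneg (stepFun_nonneg hc a) (hcg a)
  have hshift (k : Fin n) : stepFun t (fun i => c (i + k)) ∈ E.carrier ∧
      E.norm (stepFun t (fun i => c (i + k))) = E.norm (stepFun t c) :=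
    hE.mem_and_norm_eq_of_distribution_eq hc_mem (stepFun_nonneg hc)
      (stepFun_nonneg fun i => hc (i + k)) fun r hr => by
        rw [distribution_stepFun hμ ht _ hr.le, distribution_stepFun hμ ht _ hr.le]
        exact (Equiv.sum_comp (Equiv.addRight k) fun i => if r < c i then _ else 0).symm
  -- the cyclic shifts of the step function are equimeasurable with it and add up to a constant
  calc E.norm (χ (Ioc 0 t)) * ∑ i, c i = E.norm (∑ k, stepFun t (fun i => c (i + k))) := by
        rw [sum_stepFun_add_right, E.norm_smul, abs_of_nonneg (Finset.sum_nonneg fun i _ => hc i),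
          mul_comm]
    _ ≤ ∑ k, E.norm (stepFun t (fun i => c (i + k))) :=
        E.norm_sum_le _ fun k _ => (hshift k).1
    _ = n * E.norm (stepFun t c) := by simp [hshift]
    _ ≤ n * E.norm g := by gcongr

theorem mul_norm_indicator_le (hE : IsSymmetric E) {u : ℝ → ℝ} (hu : u ∈ E.carrier) (hu0 : 0 ≤ u)
    {r l : ℝ} (hr : 0 < r) (hl : χ (Ioc 0 l) ∈ E.carrier)
    (hμl : μ (Ioc 0 l) = distribution μ u r) :
    r * E.norm (χ (Ioc 0 l)) ≤ E.norm u := by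
  have hnonneg (S : Set ℝ) : 0 ≤ r • χ S :=
    smul_nonneg hr.le (indicator_nonneg fun _ _ => zero_le_one)
  obtain ⟨-, hnorm⟩ := hE.mem_and_norm_eq_of_distribution_eq (E.smul_mem r hl) (hnonneg _)
    (hnonneg {a | r < u a}) fun b hb => by
      rw [distribution_smul_indicator_one _ hb.le, distribution_smul_indicator_one _ hb.le, hμl]
      rfl
  calc r * E.norm (χ (Ioc 0 l)) = E.norm (r • χ {a | r < u a}) := by
        rw [hnorm, E.norm_smul, abs_of_pos hr]
    _ ≤ E.norm u := (IdealSpace.mem_and_norm_le_of_abs_le hu fun a => by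
        refine abs_le_abs_of_nonneg (hnonneg _ a) ?_
        by_cases ha : r < u a
        · simpa [ha] using ha.le
        · simpa [ha] using hu0 a).2

/-- The functions of `E` need not be measurable, so `distribution μ u r` is an outer measure and
need not tend to `0` as `r → ∞` in general; membership in `E` forces it to, by the weak-type bound
`mul_norm_indicator_le`. -/
theorem exists_distribution_le (hE : IsSymmetric E) (hμ : ∀ S ⊆ Ioc 0 t, μ S = volume S)
    (ht : 0 < t) (hχ : χ (Ioc 0 t) ∈ E.carrier) {u : ℝ → ℝ} (hu : u ∈ E.carrier) (hu0 : 0 ≤ u)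
    (hsupp : Function.support u ⊆ Ioc 0 t) :
    ∀ s > 0, ∃ r, distribution μ u r ≤ ENNReal.ofReal s := by
  by_contra! h
  obtain ⟨s, hs, hlarge⟩ := h
  set s₀ := min s t
  obtain ⟨hχ₀, -⟩ := IdealSpace.indicator_one_mem_and_norm_le
    (Ioc_subset_Ioc_right (min_le_right s t)) hχ
  have hφ : 0 < E.norm (χ (Ioc 0 s₀)) := IdealSpace.norm_indicator_one_pos hχ₀ <| by
    rw [measure_Ioc_of_subset hμ le_rfl (min_le_right s t), sub_zero]
    exact (ENNReal.ofReal_pos.mpr (lt_min hs ht)).ne'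
  have hbound (r : ℝ) (hr : 0 < r) : r * E.norm (χ (Ioc 0 s₀)) ≤ E.norm u := by
    have hle := distribution_le_of_support_subset hμ hsupp hr.le
    have hfin : distribution μ u r ≠ ⊤ := ne_top_of_le_ne_top ENNReal.ofReal_ne_top hle
    set l := (distribution μ u r).toReal
    have hlt : l ≤ t := ENNReal.toReal_le_of_le_ofReal ht.le hle
    have hsl : s₀ ≤ l := (ENNReal.ofReal_le_iff_le_toReal hfin).mp
      ((ENNReal.ofReal_le_ofReal (min_le_left s t)).trans (hlarge r).le)
    obtain ⟨hχl, -⟩ := IdealSpace.indicator_one_mem_and_norm_le (Ioc_subset_Ioc_right hlt) hχ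
    calc r * E.norm (χ (Ioc 0 s₀)) ≤ r * E.norm (χ (Ioc 0 l)) := by
          gcongr
          exact (IdealSpace.indicator_one_mem_and_norm_le (Ioc_subset_Ioc_right hsl) hχl).2
      _ ≤ E.norm u := hE.mul_norm_indicator_le hu hu0 hr hχl <| by
          rw [measure_Ioc_of_subset hμ le_rfl hlt, sub_zero, ENNReal.ofReal_toReal hfin]
  have := hbound ((E.norm u + 1) / E.norm (χ (Ioc 0 s₀))) (by positivity [E.norm_nonneg u])
  rw [div_mul_cancel₀ _ hφ.ne'] at this
  linarith

theorem norm_indicator_mul_sum_rearrangement_le (hE : IsSymmetric E)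
    (hμ : ∀ S ⊆ Ioc 0 t, μ S = volume S) (ht : 0 < t) (hχ : χ (Ioc 0 t) ∈ E.carrier)
    {u : ℝ → ℝ} (hu : u ∈ E.carrier) (hu0 : 0 ≤ u) (hsupp : Function.support u ⊆ Ioc 0 t)
    (n : ℕ) [NeZero n] {m : ℕ} (hmn : m ≤ n) :
    E.norm (χ (Ioc 0 t)) * ∑ i ∈ Finset.range m, rearrangement μ u ((i + 1) * t / n) ≤
      n * E.norm u := by
  have hfin := hE.exists_distribution_le hμ ht hχ hu hu0 hsupp
  obtain ⟨hmem, hnorm⟩ := hE.mem_and_norm_eq_of_distribution_eq hu hu0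
    (fun _ => rearrangement_nonneg _) fun r hr =>
      (distribution_rearrangement hμ ht hfin hsupp hr).symm
  have hsub : ∑ i ∈ Finset.range m, rearrangement μ u ((i + 1) * t / n) ≤
      ∑ i : Fin n, rearrangement μ u ((i + 1) * t / n) := by
    rw [Fin.sum_univ_eq_sum_range (fun i => rearrangement μ u ((i + 1) * t / n))]
    exact Finset.sum_le_sum_of_subset_of_nonneg (Finset.range_mono hmn) fun _ _ _ =>
      rearrangement_nonneg _
  refine (mul_le_mul_of_nonneg_left hsub (E.norm_nonneg _)).trans ?_
  rw [← hnorm]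
  refine hE.norm_indicator_mul_sum_le hμ ht (fun _ => rearrangement_nonneg _) hmem fun a => ?_
  by_cases ha : a ∈ Ioc 0 t
  · have hcell := (cellIndex_eq_iff (n := n) ht).mp ⟨ha, rfl⟩
    simp only [stepFun, indicator_of_mem ha]
    exact rearrangement_antitoneOn hfin ha.1 (ha.1.trans_le hcell.2) hcell.2
  · simp [stepFun, ha, rearrangement_nonneg]

theorem norm_indicator_mul_norm_indicator_mul_sq_le (hE : IsSymmetric E) (hF : IsSymmetric F)
    (hμ : ∀ S ⊆ Ioc 0 t, μ S = volume S) (ht : 0 < t)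
    (hEt : χ (Ioc 0 t) ∈ E.carrier) (hFt : χ (Ioc 0 t) ∈ F.carrier) {u v : ℝ → ℝ}
    (hu : u ∈ E.carrier) (hv : v ∈ F.carrier) (hu0 : 0 ≤ u) (hv0 : 0 ≤ v)
    (husupp : Function.support u ⊆ Ioc 0 t) (hvsupp : Function.support v ⊆ Ioc 0 t)
    (huv : ∀ᵐ a ∂μ, a ∈ Ioc 0 t → 1 ≤ u a * v a) {n : ℕ} (hn : 2 ≤ n) :
    E.norm (χ (Ioc 0 t)) * F.norm (χ (Ioc 0 t)) * ((n : ℝ) - 2) ^ 2 ≤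
      n ^ 2 * (E.norm u * F.norm v) := by
  have : NeZero n := ⟨by omega⟩
  have hnR : (0 : ℝ) < n := by exact_mod_cast NeZero.pos n
  set m := n - 2
  set a : ℕ → ℝ := fun i => rearrangement μ u ((i + 1) * t / n)
  set b : ℕ → ℝ := fun i => rearrangement μ v ((i + 1) * t / n)
  have ha := hE.norm_indicator_mul_sum_rearrangement_le hμ ht hEt hu hu0 husupp n (m := m)
    (by omega)
  have hb := hF.norm_indicator_mul_sum_rearrangement_le hμ ht hFt hv hv0 hvsupp n (m := m)
    (by omega)
  -- the right endpoints of the cells `i` and `m - 1 - i` add up to `(n - 1) t / n < t`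
  have hpair (i : ℕ) (hi : i < m) : 1 ≤ a i * b (m - 1 - i) := by
    refine one_le_rearrangement_mul_rearrangement
      (hE.exists_distribution_le hμ ht hEt hu hu0 husupp)
      (hF.exists_distribution_le hμ ht hFt hv hv0 hvsupp) hv0 huv (by positivity) (by positivity) ?_
    rw [measure_Ioc_of_subset hμ le_rfl le_rfl, sub_zero,
      ENNReal.ofReal_lt_ofReal_iff ht, ← add_div, div_lt_iff₀ hnR]
    have hcast : ((m - 1 - i : ℕ) : ℝ) + i + 3 = n := by
      exact_mod_cast (by omega : m - 1 - i + i + 3 = n)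
    nlinarith
  have hcs := sq_le_sum_mul_sum_of_one_le_mul_reflect (a := a) (b := b)
    (fun _ => rearrangement_nonneg _) (fun _ => rearrangement_nonneg _) hpair
  have hφ := mul_nonneg (E.norm_nonneg (χ (Ioc 0 t))) (F.norm_nonneg (χ (Ioc 0 t)))
  rw [show (n : ℝ) - 2 = m by rw [Nat.cast_sub hn]; norm_num]
  calc E.norm (χ (Ioc 0 t)) * F.norm (χ (Ioc 0 t)) * (m : ℝ) ^ 2
      ≤ E.norm (χ (Ioc 0 t)) * F.norm (χ (Ioc 0 t)) *
        ((∑ i ∈ Finset.range m, a i) * ∑ i ∈ Finset.range m, b i) := by gcongr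
    _ = (E.norm (χ (Ioc 0 t)) * ∑ i ∈ Finset.range m, a i) *
        (F.norm (χ (Ioc 0 t)) * ∑ i ∈ Finset.range m, b i) := by ring
    _ ≤ (n * E.norm u) * (n * F.norm v) :=
        mul_le_mul ha hb
          (mul_nonneg (F.norm_nonneg _) (Finset.sum_nonneg fun _ _ => rearrangement_nonneg _))
          (mul_nonneg hnR.le (E.norm_nonneg u))
    _ = n ^ 2 * (E.norm u * F.norm v) := by ring

theorem norm_indicator_mul_norm_indicator_le (hE : IsSymmetric E) (hF : IsSymmetric F)
    (hμ : ∀ S ⊆ Ioc 0 t, μ S = volume S) (ht : 0 < t)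
    (hEt : χ (Ioc 0 t) ∈ E.carrier) (hFt : χ (Ioc 0 t) ∈ F.carrier) {x y : ℝ → ℝ}
    (hx : x ∈ E.carrier) (hy : y ∈ F.carrier) (hxy : χ (Ioc 0 t) =ᵐ[μ] x * y) :
    E.norm (χ (Ioc 0 t)) * F.norm (χ (Ioc 0 t)) ≤ E.norm x * F.norm y := by
  have htrunc (G : IdealSpace μ) {f : ℝ → ℝ} (hf : f ∈ G.carrier) :=
    IdealSpace.mem_and_norm_le_of_abs_le (f := (Ioc 0 t).indicator fun a => |f a|) hf fun a => by
      by_cases ha : a ∈ Ioc 0 t <;> simp [ha]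
  obtain ⟨hu, hux⟩ := htrunc E hx
  obtain ⟨hv, hvy⟩ := htrunc F hy
  have huv : ∀ᵐ a ∂μ, a ∈ Ioc 0 t →
      1 ≤ (Ioc 0 t).indicator (fun a => |x a|) a * (Ioc 0 t).indicator (fun a => |y a|) a := by
    filter_upwards [hxy] with a ha hat
    rw [indicator_of_mem hat, indicator_of_mem hat, ← abs_mul, ← Pi.mul_apply x y, ← ha,
      indicator_of_mem hat, abs_one]
  refine le_of_forall_mul_sub_two_sq_le fun n hn => ?_
  calc E.norm (χ (Ioc 0 t)) * F.norm (χ (Ioc 0 t)) * ((n : ℝ) - 2) ^ 2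
      ≤ n ^ 2 * (E.norm ((Ioc 0 t).indicator fun a => |x a|) *
          F.norm ((Ioc 0 t).indicator fun a => |y a|)) :=
        hE.norm_indicator_mul_norm_indicator_mul_sq_le hF hμ ht hEt hFt hu hv
          (indicator_nonneg fun _ _ => abs_nonneg _) (indicator_nonneg fun _ _ => abs_nonneg _)
          support_indicator_subset support_indicator_subset huv hn
    _ ≤ n ^ 2 * (E.norm x * F.norm y) :=
        mul_le_mul_of_nonneg_left (mul_le_mul hux hvy (F.norm_nonneg _) (E.norm_nonneg x))
          (by positivity)

end IsSymmetric

/-- Theorem 2: the fundamental function of the product of two symmetric spaces on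
I = (0,1) or (0,∞) is the product of the fundamental functions:
‖χ_{(0,t]}‖_{E⊙F} = ‖χ_{(0,t]}‖_E · ‖χ_{(0,t]}‖_F. -/
theorem fundamental_function_of_product (I : Set ℝ)
    (hI : I = Set.Ioo 0 1 ∨ I = Set.Ioi 0) (μ : Measure ℝ)
    (hμ : μ = MeasureTheory.volume.restrict I)
    (E F : IdealSpace μ) (hE : IsSymmetric E) (hF : IsSymmetric F)
    (t : ℝ) (ht : t ∈ I)
    (hEt : (Set.Ioc 0 t).indicator (fun _ => (1 : ℝ)) ∈ E.carrier)
    (hFt : (Set.Ioc 0 t).indicator (fun _ => (1 : ℝ)) ∈ F.carrier) :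
    prodNorm E F ((Set.Ioc 0 t).indicator (fun _ => (1 : ℝ))) =
      E.norm ((Set.Ioc 0 t).indicator (fun _ => (1 : ℝ))) *
        F.norm ((Set.Ioc 0 t).indicator (fun _ => (1 : ℝ))) := by
  have ht0 : 0 < t := by rcases hI with rfl | rfl <;> [exact ht.1; exact ht]
  have hsub : Ioc 0 t ⊆ I := by
    rcases hI with rfl | rfl
    exacts [fun a ha => ⟨ha.1, ha.2.trans_lt ht.2⟩, fun a ha => ha.1]
  have hμt : ∀ S ⊆ Ioc 0 t, μ S = volume S := fun S hS => by
    rw [hμ, Measure.restrict_eq_self _ (hS.trans hsub)]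
  have hχχ : χ (Ioc 0 t) =ᵐ[μ] χ (Ioc 0 t) * χ (Ioc 0 t) := .of_forall fun a => by
    by_cases ha : a ∈ Ioc 0 t <;> simp [ha]
  exact le_antisymm (prodNorm_le hEt hFt hχχ) <| le_prodNorm ⟨_, hEt, _, hFt, hχχ⟩
    fun x hx y hy hxy => hE.norm_indicator_mul_norm_indicator_le hF hμt ht0 hEt hFt hx hy hxy
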